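/- arXiv:2311.00279 — 4 statements merged into one kernel-verified Lean document; each statement's English description precedes it below -/
import Mathlib

section
/- Let u be a degree-two vertex in a finite simple graph G with neighbors v and w that are not adjacent. Then {u,v} and {u,w} are both maximal cliques of G, and the maximal cliques of size ≥ 2 of G are exactly {u,v}, {u,w}, together with the maximal cliques of size ≥ 2 of G - u. -/
open SimpleGraph

/-- A maximal clique: a clique not properly contained in any other clique. -/
def MaximalClique {V : Type*} (G : SimpleGraph V) (S : Set V) : Prop :=
  G.IsClique S ∧ ∀ T : Set V, G.IsClique T → S ⊆ T → S = T

/-- The graph obtained from `G` by deleting vertex `u` (removing all its incident edges). -/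
def delVert {V : Type*} (G : SimpleGraph V) (u : V) : SimpleGraph V where
  Adj a b := G.Adj a b ∧ a ≠ u ∧ b ≠ u
  symm := by constructor; intro a b h; exact ⟨h.1.symm, h.2.2, h.2.1⟩
  loopless := by constructor; intro a h; exact G.irrefl h.1

/-
Every clique through `u` lies in `{u} ∪ N(u) = {u, v, w}`, and cannot contain both `v` and `w`;
so the cliques through `u` are the subsets of `{u, v}` and of `{u, w}`, which makes these two
edges maximal cliques. A maximal clique of `G - u` with at least two vertices stays maximal in `G`, because adding
`u` to it would leave at most one vertex besides `u`.
-/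

namespace SimpleGraph

variable {V : Type*} {G : SimpleGraph V} {S T : Set V} {u v w : V}

theorem subset_insert_neighborSet_of_isClique (hT : G.IsClique T) (hu : u ∈ T) :
    T ⊆ insert u (G.neighborSet u) := by
  intro x hx
  rcases eq_or_ne x u with rfl | hxu
  · exact Set.mem_insert x _
  · exact Set.mem_insert_of_mem u (hT hu hx hxu.symm)

theorem isClique_delVert_iff (hu : u ∉ S) : (delVert G u).IsClique S ↔ G.IsClique S :=
  ⟨fun h _ ha _ hb hab => (h ha hb hab).1,
    fun h _ ha _ hb hab => ⟨h ha hb hab, ne_of_mem_of_not_mem ha hu, ne_of_mem_of_not_mem hb hu⟩⟩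

theorem IsClique.notMem_of_delVert (hS : (delVert G u).IsClique S) (hnt : S.Nontrivial) :
    u ∉ S := by
  intro huS
  obtain ⟨x, hx, hxu⟩ := hnt.exists_ne u
  exact (hS huS hx hxu.symm).2.1 rfl

theorem MaximalClique.delVert_of_notMem (hS : MaximalClique G S) (hu : u ∉ S) :
    MaximalClique (delVert G u) S :=
  ⟨(isClique_delVert_iff hu).2 hS.1,
    fun T hT hST => hS.2 T (fun _ ha _ hb hab => (hT ha hb hab).1) hST⟩

theorem MaximalClique.of_delVert (hS : MaximalClique (delVert G u) S) (hu : u ∉ S)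
    (hins : ¬ G.IsClique (insert u S)) : MaximalClique G S := by
  refine ⟨(isClique_delVert_iff hu).1 hS.1, fun T hT hST => ?_⟩
  have huT : u ∉ T := fun huT => hins (hT.subset (Set.insert_subset huT hST))
  exact hS.2 T ((isClique_delVert_iff huT).2 hT) hST

section DegreeTwo

variable (hN : G.neighborSet u = {v, w}) (hnadj : ¬ G.Adj v w)
include hN hnadj

theorem IsClique.subset_pair_or_subset_pair (hT : G.IsClique T) (hu : u ∈ T) :
    T ⊆ {u, v} ∨ T ⊆ {u, w} := by
  have hTuvw : T ⊆ {u, v, w} := hN ▸ subset_insert_neighborSet_of_isClique hT hu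
  by_cases hv : v ∈ T
  · left
    intro x hx
    rcases hTuvw hx with rfl | rfl | rfl
    · exact Set.mem_insert x _
    · exact Set.mem_insert_of_mem u rfl
    · by_cases hxv : v = x
      · exact Set.mem_insert_of_mem u hxv.symm
      · exact absurd (hT hv hx hxv) hnadj
  · right
    intro x hx
    rcases hTuvw hx with rfl | rfl | rfl
    · exact Set.mem_insert x _
    · exact absurd hx hv
    · exact Set.mem_insert_of_mem u rfl

theorem maximalClique_pair : MaximalClique G {u, v} := by
  have huv : G.Adj u v := by simp [← mem_neighborSet, hN]
  refine ⟨isClique_pair.2 fun _ => huv, fun T hT hT' => ?_⟩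
  refine hT'.antisymm ?_
  rcases hT.subset_pair_or_subset_pair hN hnadj (hT' (Set.mem_insert u _)) with h | h
  · exact h
  · -- `v ∈ T ⊆ {u, w}` forces `v = w`
    have hv : v ∈ ({u, w} : Set V) := h (hT' (Set.mem_insert_of_mem u rfl))
    rcases hv with hvu | rfl
    · exact absurd hvu.symm huv.ne
    · exact h

theorem MaximalClique.of_delVert_of_nontrivial (hS : MaximalClique (delVert G u) S)
    (hnt : S.Nontrivial) : MaximalClique G S := by
  have huS : u ∉ S := hS.1.notMem_of_delVert hnt
  refine hS.of_delVert huS fun hins => ?_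
  -- `u ∉ S`, so `insert u S ⊆ {u, x}` would squeeze the nontrivial `S` into `{x}`
  rcases hins.subset_pair_or_subset_pair hN hnadj (Set.mem_insert u S) with h | h <;>
    exact hnt.not_subset_singleton
      ((Set.subset_insert_iff_of_notMem huS).1 ((Set.subset_insert u S).trans h))

end DegreeTwo

end SimpleGraph

theorem stmt_2_general {V : Type*} (G : SimpleGraph V) (u v w : V)
    (hu : G.neighborSet u = {v, w}) (hnadj : ¬ G.Adj v w) :
    MaximalClique G {u, v} ∧ MaximalClique G {u, w} ∧
    {S : Set V | MaximalClique G S ∧ 2 ≤ S.ncard} =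
      {({u, v} : Set V), {u, w}} ∪
        {S : Set V | MaximalClique (delVert G u) S ∧ 2 ≤ S.ncard} := by
  have hu' : G.neighborSet u = {w, v} := hu.trans (Set.pair_comm v w)
  have huv := maximalClique_pair hu hnadj
  have huw := maximalClique_pair hu' fun h => hnadj h.symm
  have hne : ∀ x ∈ ({v, w} : Set V), u ≠ x := fun x hx =>
    G.ne_of_adj (hu.symm ▸ hx : x ∈ G.neighborSet u)
  refine ⟨huv, huw, Set.ext fun S => ⟨?_, ?_⟩⟩
  · rintro ⟨hS, hcard⟩
    by_cases huS : u ∈ S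
    · left
      rcases hS.1.subset_pair_or_subset_pair hu hnadj huS with h | h
      · exact Or.inl (hS.2 _ huv.1 h)
      · exact Or.inr (hS.2 _ huw.1 h)
    · exact Or.inr ⟨hS.delVert_of_notMem huS, hcard⟩
  · rintro ((rfl | rfl) | ⟨hS, hcard⟩)
    · exact ⟨huv, (Set.ncard_pair (hne v (Or.inl rfl))).ge⟩
    · exact ⟨huw, (Set.ncard_pair (hne w (Or.inr rfl))).ge⟩
    · exact ⟨hS.of_delVert_of_nontrivial hu hnadj
        (Set.one_lt_ncard_iff_nontrivial_and_finite.1 hcard).1, hcard⟩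

theorem stmt_2 {V : Type*} [Fintype V] (G : SimpleGraph V) (u v w : V)
    (hvw : v ≠ w) (hu : G.neighborSet u = {v, w}) (hnadj : ¬ G.Adj v w) :
    MaximalClique G {u, v} ∧ MaximalClique G {u, w} ∧
    {S : Set V | MaximalClique G S ∧ 2 ≤ S.ncard} =
      {({u, v} : Set V), {u, w}} ∪
        {S : Set V | MaximalClique (delVert G u) S ∧ 2 ≤ S.ncard} :=
  stmt_2_general G u v w hu hnadj
end

section
/- Let (R, P, X) be a subproblem where R is a clique and every vertex of P is adjacent to all of R. If u ∈ P is adjacent to every other vertex of P (i.e., |N(u) ∩ P| = |P| - 1), then every maximal clique of G of the form R ∪ S with S ⊆ P contains u. -/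
open SimpleGraph

theorem MaximalClique.mem_of_forall_adj {V : Type*} {G : SimpleGraph V} {S : Set V} {v : V}
    (hS : MaximalClique G S) (hv : ∀ w ∈ S, v ≠ w → G.Adj v w) : v ∈ S := by
  rw [hS.2 _ (hS.1.insert hv) (Set.subset_insert v S)]
  exact Set.mem_insert v S

theorem stmt_12_general {V : Type*} (G : SimpleGraph V) (R P : Set V)
    (hadjP : ∀ x ∈ P, ∀ r ∈ R, G.Adj x r)
    (u : V) (hu : u ∈ P)
    (hdom : ∀ x ∈ P, x ≠ u → G.Adj u x) :
    ∀ S ⊆ P, MaximalClique G (R ∪ S) → u ∈ R ∪ S := by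
  intro S hSP hmax
  refine hmax.mem_of_forall_adj ?_
  rintro w (hwR | hwS) hne
  · exact hadjP u hu w hwR
  · exact hdom w (hSP hwS) hne.symm

theorem stmt_12 {V : Type*} [Fintype V] (G : SimpleGraph V) (R P X : Set V)
    (hR : G.IsClique R)
    (hadjP : ∀ x ∈ P, ∀ r ∈ R, G.Adj x r)
    (u : V) (hu : u ∈ P)
    (hdom : ∀ x ∈ P, x ≠ u → G.Adj u x) :
    ∀ S ⊆ P, MaximalClique G (R ∪ S) → u ∈ R ∪ S :=
  stmt_12_general G R P hadjP u hu hdom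
end

section
/- Let G be a finite simple graph with a linear order on its vertices, and let u, v be vertices with u earlier than v such that N⁺(v) ⊆ N⁺(u), i.e., u is adjacent to every vertex that v is adjacent to among vertices later than v. Then for every vertex w later than v, whenever v ∈ N⁻(w) (i.e., v is an earlier neighbor of w) we also have u ∈ N⁻(w); in particular, in every subproblem induced by a vertex w later than v with candidate set N⁺(w) and forbidden set N⁻(w), the vertex v can be removed from the forbidden set without changing which cliques pass the maximality test. -/
open SimpleGraph

theorem stmt_17 {V : Type*} [Fintype V] [LinearOrder V] (G : SimpleGraph V)
    (u v : V) (huv : u < v)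
    (hsub : ∀ x, G.Adj v x → v < x → G.Adj u x) :
    ∀ w : V, v < w →
      ((G.Adj w v → G.Adj w u) ∧
        ∀ S ⊆ {x | G.Adj w x ∧ w < x}, G.IsClique (insert w S) →
          ((∃ x, (G.Adj w x ∧ x < w) ∧ ∀ y ∈ insert w S, G.Adj x y) ↔
            (∃ x, (G.Adj w x ∧ x < w) ∧ x ≠ v ∧ ∀ y ∈ insert w S, G.Adj x y))) := by
  intro w hvw
  have key : G.Adj w v → G.Adj w u := fun h => ((hsub w h.symm hvw).symm)
  refine ⟨key, ?_⟩
  intro S hS hclique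
  constructor
  · rintro ⟨x, ⟨hxw, hxlt⟩, hall⟩
    by_cases hxv : x = v
    · rw [hxv] at hall
      have hadju : ∀ y ∈ insert w S, G.Adj u y := by
        intro y hy
        have hvy : v < y := by
          rcases hy with rfl | hy
          · exact hvw
          · exact hvw.trans (hS hy).2
        exact hsub y (hall y hy) hvy
      refine ⟨u, ⟨(hadju w (Set.mem_insert _ _)).symm, huv.trans hvw⟩, huv.ne, hadju⟩
    · exact ⟨x, ⟨hxw, hxlt⟩, hxv, hall⟩
  · rintro ⟨x, hx, _, hall⟩
    exact ⟨x, hx, hall⟩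
end

section
/- Let (R, P, X) be a subproblem where R is a clique, every vertex of P ∪ X is adjacent to all of R, and every vertex adjacent to all of R lies in R ∪ P ∪ X. If P = ∅, then R is a maximal clique of G if and only if X = ∅. -/
open SimpleGraph

/-! A vertex adjacent to every vertex of `R` cannot lie in `R` (no loops), so a clique is maximal
iff no vertex is adjacent to all of it. The subproblem invariants say precisely that `P ∪ X` is
the set of such vertices; hence `R` is maximal iff `P ∪ X = ∅`. -/

section

variable {V : Type*} {G : SimpleGraph V} {R : Set V}

lemma notMem_of_forall_adj {x : V} (hx : ∀ r ∈ R, G.Adj x r) : x ∉ R :=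
  fun hxR => G.irrefl (hx x hxR)

lemma maximalClique_iff_forall_not_forall_adj :
    MaximalClique G R ↔ G.IsClique R ∧ ∀ x, ¬ ∀ r ∈ R, G.Adj x r := by
  refine ⟨fun ⟨hR, hmax⟩ => ⟨hR, fun x hx => ?_⟩, fun ⟨hR, hnone⟩ => ⟨hR, fun T hT hRT => ?_⟩⟩
  · have hclique : G.IsClique (insert x R) :=
      isClique_insert.mpr ⟨hR, fun r hr _ => hx r hr⟩
    have hxR : x ∈ R := (hmax _ hclique (Set.subset_insert x R)) ▸ Set.mem_insert x R
    exact notMem_of_forall_adj hx hxR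
  · refine hRT.antisymm fun t ht => ?_
    by_contra htR
    exact hnone t fun r hr => hT ht (hRT hr) fun h => htR (h ▸ hr)

lemma forall_adj_iff_mem_union {P X : Set V}
    (hadj : ∀ x ∈ P ∪ X, ∀ r ∈ R, G.Adj x r)
    (hclosed : ∀ x, (∀ r ∈ R, G.Adj x r) → x ∈ R ∪ P ∪ X) (x : V) :
    (∀ r ∈ R, G.Adj x r) ↔ x ∈ P ∪ X := by
  refine ⟨fun hx => ?_, hadj x⟩
  rcases hclosed x hx with (hxR | hxP) | hxX
  · exact absurd hxR (notMem_of_forall_adj hx)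
  · exact Or.inl hxP
  · exact Or.inr hxX

lemma maximalClique_iff_union_eq_empty {P X : Set V} (hR : G.IsClique R)
    (hadj : ∀ x ∈ P ∪ X, ∀ r ∈ R, G.Adj x r)
    (hclosed : ∀ x, (∀ r ∈ R, G.Adj x r) → x ∈ R ∪ P ∪ X) :
    MaximalClique G R ↔ P ∪ X = ∅ := by
  simp only [maximalClique_iff_forall_not_forall_adj, forall_adj_iff_mem_union hadj hclosed,
    hR, true_and, Set.eq_empty_iff_forall_notMem]

end

theorem stmt_19_general {V : Type*} (G : SimpleGraph V) (R P X : Set V)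
    (hR : G.IsClique R)
    (hadj : ∀ x ∈ P ∪ X, ∀ r ∈ R, G.Adj x r)
    (hclosed : ∀ x, (∀ r ∈ R, G.Adj x r) → x ∈ R ∪ P ∪ X)
    (hP : P = ∅) :
    MaximalClique G R ↔ X = ∅ := by
  rw [maximalClique_iff_union_eq_empty hR hadj hclosed, hP, Set.empty_union]

theorem stmt_19 {V : Type*} [Fintype V] (G : SimpleGraph V) (R P X : Set V)
    (hR : G.IsClique R)
    (hadj : ∀ x ∈ P ∪ X, ∀ r ∈ R, G.Adj x r)
    (hclosed : ∀ x, (∀ r ∈ R, G.Adj x r) → x ∈ R ∪ P ∪ X)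
    (hP : P = ∅) :
    MaximalClique G R ↔ X = ∅ :=
  stmt_19_general G R P X hR hadj hclosed hP
end
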